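/- For symmetric negative definite n×n matrices the function X ↦ tr(X⁻¹) is concave: for negative definite X, Y and θ ∈ [0,1], tr((θX+(1-θ)Y)⁻¹) ≥ θ·tr(X⁻¹) + (1-θ)·tr(Y⁻¹). -/

import Mathlib

/-!
For a positive definite `A` and any Hermitian `N`,
`tr A⁻¹ - (2 tr N - tr (N A N)) = tr ((N - A⁻¹) A (N - A⁻¹)) ≥ 0`, with equality at `N = A⁻¹`.
So `A ↦ tr A⁻¹` is a pointwise supremum of affine functions of `A`, hence convex on positive
definite matrices; the concavity on negative definite matrices follows by `X ↦ -X`.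
-/

open Matrix

namespace Matrix

variable {ι : Type*}

theorem convex_setOf_posDef : Convex ℝ {A : Matrix ι ι ℝ | A.PosDef} := by
  intro A hA B hB a b ha hb hab
  rcases ha.lt_or_eq with ha | rfl
  · exact (hA.smul ha).add_posSemidef (hB.posSemidef.smul hb)
  · rw [zero_add] at hab
    simpa [hab] using hB

variable [Fintype ι] [DecidableEq ι]

theorem inv_neg {R : Type*} [CommRing R] (A : Matrix ι ι R) : (-A)⁻¹ = -A⁻¹ := by
  by_cases h : IsUnit A.det
  · exact inv_eq_right_inv (by rw [neg_mul_neg, mul_nonsing_inv A h])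
  · have h' : ¬IsUnit (-A).det := by
      rwa [det_neg, (isUnit_neg_one.pow _).mul_left_iff]
    rw [nonsing_inv_apply_not_isUnit A h, nonsing_inv_apply_not_isUnit _ h', neg_zero]

namespace PosDef

theorem two_mul_trace_sub_trace_mul_mul_le_trace_inv {A N : Matrix ι ι ℝ} (hA : A.PosDef)
    (hN : N.IsHermitian) : 2 * N.trace - (N * A * N).trace ≤ A⁻¹.trace := by
  have hdet : IsUnit A.det := (isUnit_iff_isUnit_det A).1 hA.isUnit
  have hD : (N - A⁻¹)ᴴ = N - A⁻¹ := (hN.sub hA.isHermitian.inv).eq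
  have hsq : (N - A⁻¹)ᴴ * A * (N - A⁻¹) = N * A * N - N - N + A⁻¹ := by
    simp only [hD, sub_mul, mul_sub, Matrix.mul_assoc, nonsing_inv_mul _ hdet,
      mul_nonsing_inv _ hdet, Matrix.one_mul, Matrix.mul_one]
    abel
  have hnonneg := (hA.posSemidef.conjTranspose_mul_mul_same (N - A⁻¹)).trace_nonneg
  rw [hsq, trace_add, trace_sub, trace_sub] at hnonneg
  linarith

theorem convexOn_trace_inv : ConvexOn ℝ {A : Matrix ι ι ℝ | A.PosDef} (fun A ↦ A⁻¹.trace) := by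
  refine ⟨convex_setOf_posDef, fun A hA B hB a b ha hb hab ↦ ?_⟩
  set M := a • A + b • B
  have hM : M.PosDef := convex_setOf_posDef hA hB ha hb hab
  have hN := hM.isHermitian.inv
  have hMN : M⁻¹ * M * M⁻¹ = M⁻¹ := by
    rw [nonsing_inv_mul _ ((isUnit_iff_isUnit_det M).1 hM.isUnit), Matrix.one_mul]
  have htr : M⁻¹.trace = a * (M⁻¹ * A * M⁻¹).trace + b * (M⁻¹ * B * M⁻¹).trace := by
    conv_lhs => rw [← hMN]
    simp only [M, Matrix.mul_add, Matrix.add_mul, Matrix.mul_smul, Matrix.smul_mul, trace_add,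
      trace_smul, smul_eq_mul]
  have hAN := two_mul_trace_sub_trace_mul_mul_le_trace_inv hA hN
  have hBN := two_mul_trace_sub_trace_mul_mul_le_trace_inv hB hN
  calc M⁻¹.trace
      = a * (2 * M⁻¹.trace - (M⁻¹ * A * M⁻¹).trace)
        + b * (2 * M⁻¹.trace - (M⁻¹ * B * M⁻¹).trace) := by
        linear_combination -htr - 2 * M⁻¹.trace * hab
    _ ≤ a * A⁻¹.trace + b * B⁻¹.trace := by gcongr
    _ = a • A⁻¹.trace + b • B⁻¹.trace := by simp only [smul_eq_mul]

end PosDef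

end Matrix

theorem trace_inv_concave_negDef_general {n : ℕ} (X Y : Matrix (Fin n) (Fin n) ℝ)
    (hX : (-X).PosDef) (hY : (-Y).PosDef)
    (θ : ℝ) (hθ0 : 0 ≤ θ) (hθ1 : θ ≤ 1) :
    θ * (X⁻¹).trace + (1 - θ) * (Y⁻¹).trace ≤ ((θ • X + (1 - θ) • Y)⁻¹).trace := by
  have h := PosDef.convexOn_trace_inv.2 hX hY hθ0 (sub_nonneg.2 hθ1) (add_sub_cancel θ 1)
  simp only [smul_neg, ← neg_add, Matrix.inv_neg, trace_neg, smul_eq_mul] at h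
  linarith

/-- `X ↦ tr (X⁻¹)` is concave on symmetric negative definite matrices. -/
theorem trace_inv_concave_negDef {n : ℕ} (X Y : Matrix (Fin n) (Fin n) ℝ)
    (hXs : X.IsSymm) (hYs : Y.IsSymm) (hX : (-X).PosDef) (hY : (-Y).PosDef)
    (θ : ℝ) (hθ0 : 0 ≤ θ) (hθ1 : θ ≤ 1) :
    θ * (X⁻¹).trace + (1 - θ) * (Y⁻¹).trace ≤ ((θ • X + (1 - θ) • Y)⁻¹).trace :=
  trace_inv_concave_negDef_general X Y hX hY θ hθ0 hθ1
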